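/- arXiv:1110.4161 — 2 statements merged into one kernel-verified Lean document; each statement's English description precedes it below -/
import Mathlib

section
/- In the DCR graph encoding of a CRES (where every event excludes itself and conflicting events mutually exclude each other, initial marking (∅, Re, E)), after executing any sequence of events e₀,...,e_{n-1}, the set of included events In_n equals E minus the set {e' | ∃ i < n, e' = e_i or e' # e_i}; in particular every executed event is excluded. -/
/-- A marking of a DCR graph: (executed, pending responses, included). -/
abbrev Marking (E : Type*) := Set E × Set E × Set E

/-- Effect of executing event `e` on a marking. -/
def dcrExec {E : Type*} (resp incl excl : E → E → Prop) (M : Marking E) (e : E) :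
    Marking E :=
  (M.1 ∪ {e}, (M.2.1 \ {e}) ∪ {e' | resp e e'},
    (M.2.2 ∪ {e' | incl e e'}) \ {e' | excl e e'})

/-- Event `e` is enabled in marking `M`: it is included and all its included
condition events have been executed. -/
def dcrEnabled {E : Type*} (cond : E → E → Prop) (M : Marking E) (e : E) : Prop :=
  e ∈ M.2.2 ∧ {e' | e' ∈ M.2.2 ∧ cond e' e} ⊆ M.1

/-- One optional step: `none` leaves the marking unchanged. -/
def dcrStepOpt {E : Type*} (resp incl excl : E → E → Prop) (M : Marking E) :
    Option E → Marking E
  | none => M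
  | some e => dcrExec resp incl excl M e

/-- The marking reached after the first `n` steps of the (possibly finite) run `ρ`. -/
def markAt {E : Type*} (resp incl excl : E → E → Prop) (M0 : Marking E)
    (ρ : ℕ → Option E) : ℕ → Marking E
  | 0 => M0
  | n + 1 => dcrStepOpt resp incl excl (markAt resp incl excl M0 ρ n) (ρ n)

/-- A (finite or infinite) run of a DCR graph from initial marking `M0`: defined
positions form an initial segment and every executed event is enabled. -/
def IsDCRRun {E : Type*} (cond resp incl excl : E → E → Prop) (M0 : Marking E)
    (ρ : ℕ → Option E) : Prop :=
  (∀ i j, i ≤ j → ρ i = none → ρ j = none) ∧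
  (∀ i e, ρ i = some e → dcrEnabled cond (markAt resp incl excl M0 ρ i) e)

/-- A run is accepting if no event stays included and pending forever without being
executed: every pending response is eventually executed or excluded. -/
def DCRAccepting {E : Type*} (resp incl excl : E → E → Prop) (M0 : Marking E)
    (ρ : ℕ → Option E) : Prop :=
  ∀ i e, e ∈ (markAt resp incl excl M0 ρ i).2.1 →
    ∃ j, i ≤ j ∧ (ρ j = some e ∨ e ∉ (markAt resp incl excl M0 ρ j).2.2)

section
variable {E : Type*}

def executedBefore (ρ : ℕ → Option E) (n : ℕ) : Set E := {a | ∃ i < n, ρ i = some a}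

@[simp]
lemma executedBefore_zero (ρ : ℕ → Option E) : executedBefore ρ 0 = ∅ := by
  simp [executedBefore]

lemma executedBefore_succ (ρ : ℕ → Option E) (n : ℕ) :
    executedBefore ρ (n + 1) = executedBefore ρ n ∪ {a | ρ n = some a} := by
  ext a
  simp only [executedBefore, Nat.lt_succ_iff_lt_or_eq, or_and_right, exists_or,
    exists_eq_left, Set.mem_union, Set.mem_ofPred_eq]

variable (resp incl excl : E → E → Prop) (M0 : Marking E) (ρ : ℕ → Option E)

lemma markAt_executed (n : ℕ) :
    (markAt resp incl excl M0 ρ n).1 = M0.1 ∪ executedBefore ρ n := by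
  induction n with
  | zero => simp [markAt]
  | succ n ih =>
    rw [executedBefore_succ, ← Set.union_assoc, ← ih]
    cases h : ρ n <;> simp [markAt, dcrStepOpt, dcrExec, h]

lemma markAt_included_of_no_include (n : ℕ) :
    (markAt resp (fun _ _ => False) excl M0 ρ n).2.2 =
      M0.2.2 \ {e' | ∃ a ∈ executedBefore ρ n, excl a e'} := by
  induction n with
  | zero => simp [markAt]
  | succ n ih =>
    cases h : ρ n with
    | none => simp [markAt, dcrStepOpt, h, ih, executedBefore_succ]
    | some a =>
      simp [markAt, dcrStepOpt, dcrExec, h, ih, executedBefore_succ, or_and_right,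
        exists_or, Set.sdiff_sdiff, Set.ofPred_or, Set.union_comm]
end

theorem stmt6_general {E : Type*} (conf : E → E → Prop)
    (hsym : ∀ e e', conf e e' → conf e' e)
    (resp : E → E → Prop) (Re : Set E)
    (ρ : ℕ → Option E) :
    ∀ n : ℕ,
      (markAt resp (fun _ _ => False) (fun e e' => e = e' ∨ conf e e')
          (∅, Re, Set.univ) ρ n).2.2 =
        Set.univ \ {e' | ∃ i < n, ∃ a, ρ i = some a ∧ (e' = a ∨ conf e' a)} ∧
      ∀ e ∈ (markAt resp (fun _ _ => False) (fun e e' => e = e' ∨ conf e e')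
          (∅, Re, Set.univ) ρ n).1,
        e ∉ (markAt resp (fun _ _ => False) (fun e e' => e = e' ∨ conf e e')
          (∅, Re, Set.univ) ρ n).2.2 := by
  intro n
  have hincl := markAt_included_of_no_include resp (fun e e' => e = e' ∨ conf e e')
    (∅, Re, Set.univ) ρ n
  refine ⟨?_, fun e he => ?_⟩
  · rw [hincl]
    ext e'
    simp only [executedBefore, Set.mem_sdiff, Set.mem_ofPred_eq, Set.mem_univ, true_and,
      not_iff_not]
    constructor
    · rintro ⟨a, ⟨i, hi, ha⟩, hexcl⟩
      exact ⟨i, hi, a, ha, hexcl.imp Eq.symm (hsym a e')⟩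
    · rintro ⟨i, hi, a, ha, hexcl⟩
      exact ⟨a, ⟨i, hi, ha⟩, hexcl.imp Eq.symm (hsym e' a)⟩
  · rw [markAt_executed, Set.empty_union] at he
    rw [hincl]
    exact fun hin => hin.2 ⟨e, he, Or.inl rfl⟩

/-- In the DCR graph encoding of a CRES (every event excludes itself, conflicting events
mutually exclude each other, no include relation, initial marking `(∅, Re, E)`), after
`n` steps of any run the included set equals `E` minus the events equal to or in
conflict with some executed event; in particular every executed event is excluded. -/
theorem stmt6 {E : Type*} (conf : E → E → Prop)
    (hirr : ∀ e, ¬ conf e e) (hsym : ∀ e e', conf e e' → conf e' e)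
    (resp : E → E → Prop) (Re : Set E) (cond : E → E → Prop)
    (ρ : ℕ → Option E)
    (hrun : IsDCRRun cond resp (fun _ _ => False) (fun e e' => e = e' ∨ conf e e')
      (∅, Re, Set.univ) ρ) :
    ∀ n : ℕ,
      (markAt resp (fun _ _ => False) (fun e e' => e = e' ∨ conf e e')
          (∅, Re, Set.univ) ρ n).2.2 =
        Set.univ \ {e' | ∃ i < n, ∃ a, ρ i = some a ∧ (e' = a ∨ conf e' a)} ∧
      ∀ e ∈ (markAt resp (fun _ _ => False) (fun e e' => e = e' ∨ conf e e')
          (∅, Re, Set.univ) ρ n).1,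
        e ∉ (markAt resp (fun _ _ => False) (fun e e' => e = e' ∨ conf e e')
          (∅, Re, Set.univ) ρ n).2.2 :=
  stmt6_general conf hsym resp Re ρ
end

section
/- For a finite distributed DCR graph D, the Büchi automaton with τ-event B(D) constructed from D has exactly the same runs and the same accepting runs as D. -/
/-- Projection of a distributed run to its underlying sequence of events. -/
def projEv {E P Act Roles : Type*} (ρ : ℕ → Option (E × P × Act × Roles)) :
    ℕ → Option E := fun i => (ρ i).map Prod.fst

/-- A run of a distributed DCR graph `(G, Roles, P, as)`. -/
def IsDistDCRRun {E P Act Roles : Type*} (cond resp incl excl : E → E → Prop)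
    (M0 : Marking E) (l : E → Act) (as : (P ⊕ Act) → Roles → Prop)
    (ρ : ℕ → Option (E × P × Act × Roles)) : Prop :=
  (∀ i j, i ≤ j → ρ i = none → ρ j = none) ∧
  (∀ i e p a r, ρ i = some (e, p, a, r) →
    a = l e ∧ as (Sum.inl p) r ∧ as (Sum.inr a) r ∧
    dcrEnabled cond (markAt resp incl excl M0 (projEv ρ) i) e)

/-- A distributed run is accepting iff its underlying DCR run is accepting. -/
def DistDCRAccepting {E P Act Roles : Type*} (resp incl excl : E → E → Prop)
    (M0 : Marking E) (ρ : ℕ → Option (E × P × Act × Roles)) : Prop :=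
  DCRAccepting resp incl excl M0 (projEv ρ)

/-- `m` is the element of minimal rank in `S`. -/
def MinRankIn {E : Type*} (rank : E → ℕ) (S : Set E) (m : E) : Prop :=
  m ∈ S ∧ ∀ e ∈ S, rank m ≤ rank e

/-- A state of the Büchi automaton `B(D)`: a marking, a rank index, and an
acceptance flag. -/
abbrev BState (E : Type*) := Marking E × ℕ × Bool

/-- The transition relation of the Büchi automaton with τ-event `B(D)`.  A `none`
label (the τ-event) leaves marking and index unchanged and sets the flag to `true` iff
there is no included pending response.  An event label performs the distributed DCR
transition and updates flag and index according to whether the minimal-ranked included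
pending response above the current index (or overall, if none is above) is executed or
excluded. -/
def BuchiStep {E P Act Roles : Type*} (cond resp incl excl : E → E → Prop)
    (l : E → Act) (as : (P ⊕ Act) → Roles → Prop) (rank : E → ℕ)
    (S1 : BState E) (lab : Option (E × P × Act × Roles)) (S2 : BState E) : Prop :=
  match lab with
  | none =>
      S2.1 = S1.1 ∧ S2.2.1 = S1.2.1 ∧
      (S2.2.2 = true ↔ S1.1.2.2 ∩ S1.1.2.1 = ∅)
  | some (e, p, a, r) =>
      a = l e ∧ as (Sum.inl p) r ∧ as (Sum.inr a) r ∧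
      dcrEnabled cond S1.1 e ∧ S2.1 = dcrExec resp incl excl S1.1 e ∧
      -- included pending responses before and after, those ranked above the index,
      -- and the events resolved (executed or excluded) by this transition:
      (let R' := S1.1.2.2 ∩ S1.1.2.1
       let R'' := S2.1.2.2 ∩ S2.1.2.1
       let Mr := {x ∈ R' | S1.2.1 < rank x}
       let Res := (R' \ R'') ∪ {e}
       (S2.2.2 = true ↔
         (R'' = ∅ ∨ (∃ m, MinRankIn rank Mr m ∧ m ∈ Res) ∨
           (Mr = ∅ ∧ ∃ m, MinRankIn rank R' m ∧ m ∈ Res))) ∧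
       (∀ m, MinRankIn rank Mr m → m ∈ Res → S2.2.1 = rank m) ∧
       ((¬ ∃ m, MinRankIn rank Mr m ∧ m ∈ Res) → Mr = ∅ →
         ∀ m, MinRankIn rank R' m → m ∈ Res → S2.2.1 = rank m) ∧
       ((¬ ∃ m, MinRankIn rank Mr m ∧ m ∈ Res) →
         (¬ (Mr = ∅ ∧ ∃ m, MinRankIn rank R' m ∧ m ∈ Res)) → S2.2.1 = S1.2.1))

/-- An infinite execution of the Büchi automaton `B(D)` from its initial state
`(M0, 1, j)` where `j = 1` iff `In ∩ Re = ∅` initially. -/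
def BuchiTrace {E P Act Roles : Type*} (cond resp incl excl : E → E → Prop)
    (l : E → Act) (as : (P ⊕ Act) → Roles → Prop) (rank : E → ℕ) (M0 : Marking E)
    (σ : ℕ → BState E) (lab : ℕ → Option (E × P × Act × Roles)) : Prop :=
  (σ 0).1 = M0 ∧ (σ 0).2.1 = 1 ∧ ((σ 0).2.2 = true ↔ M0.2.2 ∩ M0.2.1 = ∅) ∧
  ∀ k, BuchiStep cond resp incl excl l as rank (σ k) (lab k) (σ (k + 1))

/-- A Büchi execution is accepting iff it passes through an accepting state (flag `1`)
infinitely often. -/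
def BuchiAccepting {E : Type*} (σ : ℕ → BState E) : Prop :=
  ∀ N, ∃ k, N ≤ k ∧ (σ k).2.2 = true

open Classical in
/-- Number of non-τ labels strictly before position `i`. -/
noncomputable def cntEv {L : Type*} (lab : ℕ → Option L) (i : ℕ) : ℕ :=
  ((Finset.range i).filter fun j => (lab j).isSome).card

/-- `ρ` is the sequence obtained from the label sequence `lab` by deleting all τ
(`none`) labels: `ρ k` is the `k`-th non-τ label if it exists and `none` otherwise. -/
def IsTauDeletion {L : Type*} (lab : ℕ → Option L) (ρ : ℕ → Option L) : Prop :=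
  ∀ k, (∃ i, cntEv lab i = k ∧ (lab i).isSome ∧ ρ k = lab i) ∨
    ((∀ i, cntEv lab i = k → lab i = none) ∧ ρ k = none)

section Aux
open Classical

variable {E P Act Roles : Type*}

lemma exists_minRankIn [Finite E] (rank : E → ℕ) {S : Set E} (hS : S.Nonempty) :
    ∃ m, MinRankIn rank S m := by
  obtain ⟨m, hmS, hmin⟩ := Set.exists_min_image S rank (Set.toFinite S) hS
  exact ⟨m, hmS, hmin⟩

lemma minRankIn_unique {rank : E → ℕ} (hrank : Function.Injective rank) {S : Set E}
    {m m' : E} (h1 : MinRankIn rank S m) (h2 : MinRankIn rank S m') : m = m' :=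
  hrank (le_antisymm (h1.2 _ h2.1) (h2.2 _ h1.1))

lemma cntEv_succ {L : Type*} (lab : ℕ → Option L) (i : ℕ) :
    cntEv lab (i + 1) = cntEv lab i + (if (lab i).isSome then 1 else 0) := by
  unfold cntEv
  rw [Finset.range_add_one, Finset.filter_insert]
  split <;> simp [Finset.card_insert_of_notMem]

lemma cntEv_mono {L : Type*} (lab : ℕ → Option L) : Monotone (cntEv lab) := by
  apply monotone_nat_of_le_succ
  intro n
  rw [cntEv_succ]
  split <;> omega

lemma cntEv_le {L : Type*} (lab : ℕ → Option L) (i : ℕ) : cntEv lab i ≤ i := by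
  induction i with
  | zero => simp [cntEv]
  | succ n ih => rw [cntEv_succ]; split <;> omega

/-- positions with the same count and both some-labels coincide -/
lemma cntEv_inj {L : Type*} {lab : ℕ → Option L} {i m : ℕ}
    (hi : (lab i).isSome) (hm : (lab m).isSome) (h : cntEv lab i = cntEv lab m) :
    i = m := by
  rcases lt_trichotomy i m with hlt | he | hlt
  · have h1 : cntEv lab (i+1) ≤ cntEv lab m := cntEv_mono lab hlt
    rw [cntEv_succ, if_pos hi] at h1; omega
  · exact he
  · have h1 : cntEv lab (m+1) ≤ cntEv lab i := cntEv_mono lab hlt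
    rw [cntEv_succ, if_pos hm] at h1; omega

/-- intermediate value: if the count reaches past k, some position has count k with a some-label -/
lemma cntEv_surj {L : Type*} {lab : ℕ → Option L} {k n : ℕ} (h : k < cntEv lab n) :
    ∃ m, cntEv lab m = k ∧ (lab m).isSome := by
  induction n with
  | zero => simp [cntEv] at h
  | succ n ih =>
    rw [cntEv_succ] at h
    by_cases h2 : k < cntEv lab n
    · exact ih h2
    · have h3 : (lab n).isSome := by by_contra hc; simp [hc] at h; omega
      refine ⟨n, ?_, h3⟩
      rw [if_pos h3] at h; omega

/-- τ-deletion determines ρ at counts of some-labels -/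
lemma tauDel_at_some {L : Type*} {lab ρ : ℕ → Option L} (ht : IsTauDeletion lab ρ)
    {m : ℕ} (hm : (lab m).isSome) : ρ (cntEv lab m) = lab m := by
  rcases ht (cntEv lab m) with ⟨i, hi1, hi2, hi3⟩ | ⟨h1, _⟩
  · rwa [cntEv_inj hi2 hm hi1] at hi3
  · exact absurd (h1 m rfl) (by simp [Option.isSome_iff_exists] at hm ⊢; rcases hm with ⟨v,hv⟩; simp [hv])

/-- An antitone ℕ-sequence is eventually constant. -/
lemma antitone_eventually_const (f : ℕ → ℕ) (h : ∀ k, f (k + 1) ≤ f k) :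
    ∃ K, ∀ k, K ≤ k → f k = f K := by
  have hm : ∀ a b, a ≤ b → f b ≤ f a := by
    intro a b hab
    induction b with
    | zero => have : a = 0 := by omega
              simp [this]
    | succ n ih =>
      rcases Nat.lt_or_ge a (n+1) with h1 | h1
      · exact le_trans (h n) (ih (by omega))
      · have : a = n + 1 := by omega
        simp [this]
  by_contra hc
  push_neg at hc
  -- build a strictly decreasing chain: ∀ j, ∃ K, f K + j ≤ f 0
  have main : ∀ j, ∃ K, f K + j ≤ f 0 := by
    intro j
    induction j with
    | zero => exact ⟨0, by omega⟩
    | succ n ih =>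
      obtain ⟨K, hK⟩ := ih
      obtain ⟨k, hk1, hk2⟩ := hc K
      have : f k < f K := lt_of_le_of_ne (hm _ _ hk1) hk2
      exact ⟨k, by omega⟩
  obtain ⟨K, hK⟩ := main (f 0 + 1)
  omega

/-- If a function is nondecreasing from `m0`, bounded by `C`, and strictly increases
infinitely often, contradiction. -/
lemma no_unbounded_increase {f : ℕ → ℕ} {m0 C : ℕ}
    (hmono : ∀ m, m0 ≤ m → f m ≤ f (m + 1))
    (hbound : ∀ m, m0 ≤ m → f m ≤ C)
    (hinf : ∀ m, ∃ k, m ≤ k ∧ m0 ≤ k ∧ f k < f (k + 1)) : False := by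
  have hm : ∀ a b, m0 ≤ a → a ≤ b → f a ≤ f b := by
    intro a b ha hab
    induction b with
    | zero => have : a = 0 := by omega
              simp [this]
    | succ n ih =>
      rcases Nat.lt_or_ge a (n+1) with h1 | h1
      · exact le_trans (ih (by omega)) (hmono n (by omega))
      · have : a = n + 1 := by omega
        simp [this]
  have main : ∀ j, ∃ m, m0 ≤ m ∧ f m0 + j ≤ f m := by
    intro j
    induction j with
    | zero => exact ⟨m0, le_refl _, by omega⟩
    | succ n ih =>
      obtain ⟨m, hm1, hm2⟩ := ih
      obtain ⟨k, hk1, hk2, hk3⟩ := hinf m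
      have := hm m k hm1 hk1
      exact ⟨k + 1, by omega, by omega⟩
  obtain ⟨m, hm1, hm2⟩ := main (C + 1)
  have := hbound m hm1
  omega

end Aux
section Constr
open Classical

variable {E P Act Roles : Type*}

/-- included pending responses -/
def ipr {E : Type*} (M : Marking E) : Set E := M.2.2 ∩ M.2.1

def mrSet (rank : E → ℕ) (M : Marking E) (i : ℕ) : Set E := {x ∈ ipr M | i < rank x}

def resSet (resp incl excl : E → E → Prop) (M : Marking E) (e : E) : Set E :=
  (ipr M \ ipr (dcrExec resp incl excl M e)) ∪ {e}

noncomputable def nIdx (resp incl excl : E → E → Prop) (rank : E → ℕ)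
    (M : Marking E) (i : ℕ) (e : E) : ℕ :=
  if h : ∃ m, MinRankIn rank (mrSet rank M i) m ∧ m ∈ resSet resp incl excl M e then
    rank h.choose
  else if h2 : mrSet rank M i = ∅ ∧
      ∃ m, MinRankIn rank (ipr M) m ∧ m ∈ resSet resp incl excl M e then
    rank h2.2.choose
  else i

def nFlagProp (resp incl excl : E → E → Prop) (rank : E → ℕ)
    (M : Marking E) (i : ℕ) (e : E) : Prop :=
  ipr (dcrExec resp incl excl M e) = ∅ ∨
    (∃ m, MinRankIn rank (mrSet rank M i) m ∧ m ∈ resSet resp incl excl M e) ∨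
    (mrSet rank M i = ∅ ∧ ∃ m, MinRankIn rank (ipr M) m ∧ m ∈ resSet resp incl excl M e)

noncomputable def bNext (resp incl excl : E → E → Prop) (rank : E → ℕ)
    (S1 : BState E) : Option (E × P × Act × Roles) → BState E
  | none => (S1.1, S1.2.1, if ipr S1.1 = ∅ then true else false)
  | some (e, _, _, _) =>
      (dcrExec resp incl excl S1.1 e, nIdx resp incl excl rank S1.1 S1.2.1 e,
        if nFlagProp resp incl excl rank S1.1 S1.2.1 e then true else false)

noncomputable def bTrace (resp incl excl : E → E → Prop) (rank : E → ℕ)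
    (M0 : Marking E) (ρ : ℕ → Option (E × P × Act × Roles)) : ℕ → BState E
  | 0 => (M0, 1, if ipr M0 = ∅ then true else false)
  | k + 1 => bNext resp incl excl rank (bTrace resp incl excl rank M0 ρ k) (ρ k)

lemma bTrace_fst (resp incl excl : E → E → Prop) (rank : E → ℕ)
    (M0 : Marking E) (ρ : ℕ → Option (E × P × Act × Roles)) (k : ℕ) :
    (bTrace resp incl excl rank M0 ρ k).1 = markAt resp incl excl M0 (projEv ρ) k := by
  induction k with
  | zero => rfl
  | succ n ih =>
    rcases h : ρ n with _ | ⟨e, p, a, r⟩ <;>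
      simp [bTrace, bNext, h, markAt, projEv, dcrStepOpt, ih]

lemma bTrace_step {cond resp incl excl : E → E → Prop} {l : E → Act}
    {as : (P ⊕ Act) → Roles → Prop} {rank : E → ℕ} (hrank : Function.Injective rank)
    {M0 : Marking E} {ρ : ℕ → Option (E × P × Act × Roles)}
    (hrun : IsDistDCRRun cond resp incl excl M0 l as ρ) (k : ℕ) :
    BuchiStep cond resp incl excl l as rank (bTrace resp incl excl rank M0 ρ k)
      (ρ k) (bTrace resp incl excl rank M0 ρ (k + 1)) := by
  have hb : bTrace resp incl excl rank M0 ρ (k + 1) =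
      bNext resp incl excl rank (bTrace resp incl excl rank M0 ρ k) (ρ k) := rfl
  set S1 := bTrace resp incl excl rank M0 ρ k with hS1
  rcases h : ρ k with _ | ⟨e, p, a, r⟩
  · rw [h] at hb
    rw [hb]
    refine ⟨rfl, rfl, ?_⟩
    show (if ipr S1.1 = ∅ then true else false) = true ↔ _
    by_cases hP : S1.1.2.2 ∩ S1.1.2.1 = ∅ <;> simp [ipr, hP]
  · rw [h] at hb
    rw [hb]
    obtain ⟨hl, has1, has2, hen⟩ := hrun.2 k e p a r h
    refine ⟨hl, has1, has2, ?_, rfl, ?_, ?_, ?_, ?_⟩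
    · rw [hS1, bTrace_fst]
      exact hen
    · -- flag iff
      show (if nFlagProp resp incl excl rank S1.1 S1.2.1 e then true else false) = true ↔ _
      by_cases hp : nFlagProp resp incl excl rank S1.1 S1.2.1 e
      · rw [if_pos hp]
        simp only [true_iff]
        simpa [nFlagProp, ipr, mrSet, resSet, bNext] using hp
      · rw [if_neg hp]
        simp only [Bool.false_eq_true, false_iff]
        intro hc; exact hp (by simpa [nFlagProp, ipr, mrSet, resSet, bNext] using hc)
    · intro m hm hres
      show nIdx resp incl excl rank S1.1 S1.2.1 e = rank m
      have hm' : MinRankIn rank (mrSet rank S1.1 S1.2.1) m := by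
        simpa [mrSet, ipr] using hm
      have hres' : m ∈ resSet resp incl excl S1.1 e := by
        simpa [resSet, ipr, bNext] using hres
      have hex : ∃ m', MinRankIn rank (mrSet rank S1.1 S1.2.1) m' ∧
          m' ∈ resSet resp incl excl S1.1 e := ⟨m, hm', hres'⟩
      rw [nIdx, dif_pos hex]
      exact congrArg rank (minRankIn_unique hrank hex.choose_spec.1 hm')
    · intro hne hMr m hm hres
      show nIdx resp incl excl rank S1.1 S1.2.1 e = rank m
      have hm' : MinRankIn rank (ipr S1.1) m := by simpa [ipr] using hm
      have hres' : m ∈ resSet resp incl excl S1.1 e := by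
        simpa [resSet, ipr, bNext] using hres
      have hne' : ¬ ∃ m', MinRankIn rank (mrSet rank S1.1 S1.2.1) m' ∧
          m' ∈ resSet resp incl excl S1.1 e := by
        rintro ⟨m', h1, h2⟩
        exact hne ⟨m', by simpa [mrSet, ipr] using h1,
          by simpa [resSet, ipr, bNext] using h2⟩
      have hex : mrSet rank S1.1 S1.2.1 = ∅ ∧
          ∃ m', MinRankIn rank (ipr S1.1) m' ∧
          m' ∈ resSet resp incl excl S1.1 e :=
        ⟨by simpa [mrSet, ipr] using hMr, m, hm', hres'⟩
      rw [nIdx, dif_neg hne', dif_pos hex]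
      exact congrArg rank (minRankIn_unique hrank hex.2.choose_spec.1 hm')
    · intro hne hne2
      show nIdx resp incl excl rank S1.1 S1.2.1 e = S1.2.1
      have hne' : ¬ ∃ m', MinRankIn rank (mrSet rank S1.1 S1.2.1) m' ∧
          m' ∈ resSet resp incl excl S1.1 e := by
        rintro ⟨m', h1, h2⟩
        exact hne ⟨m', by simpa [mrSet, ipr] using h1,
          by simpa [resSet, ipr, bNext] using h2⟩
      have hne2' : ¬ (mrSet rank S1.1 S1.2.1 = ∅ ∧
          ∃ m', MinRankIn rank (ipr S1.1) m' ∧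
          m' ∈ resSet resp incl excl S1.1 e) := by
        rintro ⟨h1, m', h2, h3⟩
        exact hne2 ⟨by simpa [mrSet, ipr] using h1,
          m', by simpa [ipr] using h2, by simpa [resSet, ipr, bNext] using h3⟩
      rw [nIdx, dif_neg hne', dif_neg hne2']

lemma bTrace_isTrace {cond resp incl excl : E → E → Prop} {l : E → Act}
    {as : (P ⊕ Act) → Roles → Prop} {rank : E → ℕ} (hrank : Function.Injective rank)
    {M0 : Marking E} {ρ : ℕ → Option (E × P × Act × Roles)}
    (hrun : IsDistDCRRun cond resp incl excl M0 l as ρ) :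
    BuchiTrace cond resp incl excl l as rank M0 (bTrace resp incl excl rank M0 ρ) ρ := by
  refine ⟨rfl, rfl, ?_, bTrace_step hrank hrun⟩
  show (if ipr M0 = ∅ then true else false) = true ↔ _
  by_cases hP : M0.2.2 ∩ M0.2.1 = ∅ <;> simp [ipr, hP]

lemma tauDel_self {L : Type*} {ρ : ℕ → Option L}
    (hpre : ∀ i j, i ≤ j → ρ i = none → ρ j = none) : IsTauDeletion ρ ρ := by
  have hcnt : ∀ k, (ρ k).isSome → cntEv ρ k = k := by
    intro k hk
    unfold cntEv
    rw [Finset.filter_true_of_mem, Finset.card_range]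
    intro j hj
    simp only [Finset.mem_range] at hj
    rcases h : ρ j with _ | v
    · rw [hpre j k (by omega) h] at hk; simp at hk
    · simp
  intro k
  rcases h : ρ k with _ | v
  · right
    refine ⟨?_, rfl⟩
    intro i hi
    by_contra hc
    have hs : (ρ i).isSome := by rcases h2 : ρ i with _|_ <;> simp_all
    rw [hcnt i hs] at hi; subst hi; simp_all
  · left
    exact ⟨k, hcnt k (by simp [h]), by simp [h], h.symm⟩

end Constr
section Backward
variable {E P Act Roles : Type*}
variable {cond resp incl excl : E → E → Prop} {l : E → Act}
  {as : (P ⊕ Act) → Roles → Prop} {rank : E → ℕ} {M0 : Marking E}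
  {σ : ℕ → BState E} {lab ρ : ℕ → Option (E × P × Act × Roles)}

lemma trace_fst (htr : BuchiTrace cond resp incl excl l as rank M0 σ lab)
    (htd : IsTauDeletion lab ρ) (m : ℕ) :
    (σ m).1 = markAt resp incl excl M0 (projEv ρ) (cntEv lab m) := by
  induction m with
  | zero => simpa [cntEv, markAt] using htr.1
  | succ n ih =>
    have hstep := htr.2.2.2 n
    rcases h : lab n with _ | ⟨e, p, a, r⟩
    · rw [h] at hstep
      rw [cntEv_succ, h]
      simpa [ih] using hstep.1
    · rw [h] at hstep
      have hρ : ρ (cntEv lab n) = some (e, p, a, r) := by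
        rw [tauDel_at_some htd (by simp [h]), h]
      rw [cntEv_succ, h]
      simp only [Option.isSome_some, if_pos, markAt]
      rw [dcrStepOpt.eq_def]
      simp only [projEv, hρ, Option.map_some]
      rw [← ih]
      exact hstep.2.2.2.2.1

lemma rho_prefix (htd : IsTauDeletion lab ρ) :
    ∀ i j, i ≤ j → ρ i = none → ρ j = none := by
  intro i j hij hi
  by_contra hj
  rcases htd j with ⟨mj, hm1, hm2, _⟩ | ⟨_, h2⟩
  · have hlt : i < cntEv lab (mj + 1) := by
      rw [cntEv_succ, if_pos hm2]; omega
    obtain ⟨m', hc', hs'⟩ := cntEv_surj hlt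
    rcases htd i with ⟨i', _, h2', h3'⟩ | ⟨hall, _⟩
    · rw [hi] at h3'
      rw [← h3'] at h2'; simp at h2'
    · rw [hall m' hc'] at hs'; simp at hs'
  · exact hj h2

lemma trace_run (htr : BuchiTrace cond resp incl excl l as rank M0 σ lab)
    (htd : IsTauDeletion lab ρ) :
    IsDistDCRRun cond resp incl excl M0 l as ρ := by
  refine ⟨rho_prefix htd, ?_⟩
  intro i e p a r hi
  rcases htd i with ⟨m, hm1, _, hm3⟩ | ⟨_, h2⟩
  · have hlab : lab m = some (e, p, a, r) := by rw [← hm3, hi]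
    have hstep := htr.2.2.2 m
    rw [hlab] at hstep
    obtain ⟨hl, ha1, ha2, hen, _⟩ := hstep
    refine ⟨hl, ha1, ha2, ?_⟩
    have hfst := trace_fst htr htd m
    rw [← hm1, ← hfst]
    exact hen
  · rw [h2] at hi; cases hi

end Backward
section Stab
variable {E : Type*}

lemma stabilize [Finite E] {rank : E → ℕ} (hrank : Function.Injective rank)
    (T : ℕ → Set E) (K0 : ℕ) (hne : (T K0).Nonempty)
    (hprop : ∀ k, K0 ≤ k → ∀ m, MinRankIn rank (T k) m → m ∈ T (k + 1)) :
    ∃ x K, K0 ≤ K ∧ ∀ k, K ≤ k → MinRankIn rank (T k) x := by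
  have hne' : ∀ j, (T (K0 + j)).Nonempty := by
    intro j
    induction j with
    | zero => simpa using hne
    | succ n ih =>
      obtain ⟨m, hm⟩ := exists_minRankIn rank ih
      have h2 := hprop (K0 + n) (by omega) m hm
      exact ⟨m, by rwa [show K0 + (n + 1) = K0 + n + 1 by omega]⟩
  have hμ : ∀ j, ∃ m, MinRankIn rank (T (K0 + j)) m :=
    fun j => exists_minRankIn rank (hne' j)
  choose μ hμs using hμ
  have hstep : ∀ j, μ j ∈ T (K0 + (j + 1)) := by
    intro j
    rw [show K0 + (j + 1) = K0 + j + 1 by omega]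
    exact hprop (K0 + j) (by omega) (μ j) (hμs j)
  have hanti : ∀ j, rank (μ (j + 1)) ≤ rank (μ j) :=
    fun j => (hμs (j + 1)).2 (μ j) (hstep j)
  obtain ⟨K, hK⟩ := antitone_eventually_const (fun j => rank (μ j)) hanti
  have hconst : ∀ j, K ≤ j → μ j = μ K := by
    intro j hj
    induction j with
    | zero => have h0 : K = 0 := by omega
              rw [h0]
    | succ n ih =>
      rcases Nat.lt_or_ge K (n + 1) with h1 | h1
      · have ihn := ih (by omega)
        have e1 : rank (μ (n + 1)) = rank (μ n) := by
          rw [hK (n + 1) hj, hK n (by omega)]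
        rw [← ihn]
        exact hrank e1
      · have h2 : K = n + 1 := by omega
        rw [h2]
  refine ⟨μ K, K0 + K, by omega, fun k hk => ?_⟩
  have h3 := hμs (k - K0)
  rw [show K0 + (k - K0) = k by omega] at h3
  rwa [hconst (k - K0) (by omega)] at h3

end Stab
section FwdAcc
open Classical
variable {E P Act Roles : Type*}

lemma markAt_const {resp incl excl : E → E → Prop} {M0 : Marking E}
    {ρ' : ℕ → Option E} {i0 : ℕ} (h : ∀ k, i0 ≤ k → ρ' k = none) :
    ∀ k, i0 ≤ k → markAt resp incl excl M0 ρ' k = markAt resp incl excl M0 ρ' i0 := by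
  intro k hk
  induction k with
  | zero => have h0 : i0 = 0 := by omega
            rw [h0]
  | succ n ih =>
    rcases Nat.lt_or_ge i0 (n + 1) with h1 | h1
    · show dcrStepOpt resp incl excl (markAt resp incl excl M0 ρ' n) (ρ' n) = _
      rw [h n (by omega)]
      exact ih (by omega)
    · have h2 : i0 = n + 1 := by omega
      rw [h2]

lemma mem_resSet_right {resp incl excl : E → E → Prop} {M : Marking E} {e : E} :
    e ∈ resSet resp incl excl M e := Or.inr rfl

lemma bTrace_accepting [Finite E] {cond resp incl excl : E → E → Prop} {l : E → Act}
    {as : (P ⊕ Act) → Roles → Prop} {rank : E → ℕ} (hrank : Function.Injective rank)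
    {M0 : Marking E} {ρ : ℕ → Option (E × P × Act × Roles)}
    (hrun : IsDistDCRRun cond resp incl excl M0 l as ρ)
    (hacc : DistDCRAccepting resp incl excl M0 ρ) :
    BuchiAccepting (bTrace resp incl excl rank M0 ρ) := by
  set σ := bTrace resp incl excl rank M0 ρ with hσ
  have hfst : ∀ k, (σ k).1 = markAt resp incl excl M0 (projEv ρ) k :=
    bTrace_fst resp incl excl rank M0 ρ
  by_cases hfin : ∃ i0, ρ i0 = none
  · obtain ⟨i0, hi0⟩ := hfin
    have hnone : ∀ k, i0 ≤ k → ρ k = none := fun k hk => hrun.1 i0 k hk hi0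
    have hpnone : ∀ k, i0 ≤ k → projEv ρ k = none := by
      intro k hk; simp [projEv, hnone k hk]
    have hconst := markAt_const (resp := resp) (incl := incl) (excl := excl)
      (M0 := M0) hpnone
    have hempty : ipr (markAt resp incl excl M0 (projEv ρ) i0) = ∅ := by
      by_contra hne
      obtain ⟨x, hx⟩ := Set.nonempty_iff_ne_empty.2 hne
      obtain ⟨j, hj1, hj2⟩ := hacc i0 x hx.2
      rcases hj2 with h | h
      · rw [hpnone j hj1] at h; cases h
      · rw [hconst j hj1] at h; exact h hx.1
    intro N
    refine ⟨max N i0 + 1, by omega, ?_⟩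
    have hk : ρ (max N i0) = none := hnone _ (by omega)
    have hs : σ (max N i0 + 1) = bNext resp incl excl rank (σ (max N i0)) (ρ (max N i0)) := rfl
    rw [hs, hk]
    show (if ipr (σ (max N i0)).1 = ∅ then true else false) = true
    rw [hfst, hconst _ (by omega), if_pos hempty]
  · push_neg at hfin
    by_contra hna
    unfold BuchiAccepting at hna
    push_neg at hna
    obtain ⟨N, hN⟩ := hna
    have hflag : ∀ k, N ≤ k → (σ k).2.2 = false := by
      intro k hk
      have := hN k hk
      simpa using this
    have hev0 : ∀ k, ∃ e p a r, ρ k = some (e, p, a, r) := by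
      intro k
      rcases h : ρ k with _ | ⟨e, p, a, r⟩
      · exact absurd h (hfin k)
      · exact ⟨e, p, a, r, rfl⟩
    choose ev pp aa rr hev using hev0
    have hsucc : ∀ k, σ (k + 1) = (dcrExec resp incl excl (σ k).1 (ev k),
        nIdx resp incl excl rank (σ k).1 (σ k).2.1 (ev k),
        if nFlagProp resp incl excl rank (σ k).1 (σ k).2.1 (ev k) then true else false) := by
      intro k
      have hs : σ (k + 1) = bNext resp incl excl rank (σ k) (ρ k) := rfl
      rw [hs, hev k]
      rfl
    have hnflag : ∀ k, N ≤ k → ¬ nFlagProp resp incl excl rank (σ k).1 (σ k).2.1 (ev k) := by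
      intro k hk hP
      have hf := hflag (k + 1) (by omega)
      rw [hsucc k] at hf
      simp [if_pos hP] at hf
    have hnB : ∀ k, N ≤ k → ¬ ∃ m, MinRankIn rank (mrSet rank (σ k).1 (σ k).2.1) m ∧
        m ∈ resSet resp incl excl (σ k).1 (ev k) :=
      fun k hk h => hnflag k hk (Or.inr (Or.inl h))
    have hnC : ∀ k, N ≤ k → ¬ (mrSet rank (σ k).1 (σ k).2.1 = ∅ ∧
        ∃ m, MinRankIn rank (ipr (σ k).1) m ∧ m ∈ resSet resp incl excl (σ k).1 (ev k)) :=
      fun k hk h => hnflag k hk (Or.inr (Or.inr h))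
    have hnA : ∀ k, N ≤ k → ipr (dcrExec resp incl excl (σ k).1 (ev k)) ≠ ∅ :=
      fun k hk h => hnflag k hk (Or.inl h)
    have hidx : ∀ k, N ≤ k → (σ k).2.1 = (σ N).2.1 := by
      intro k hk
      induction k with
      | zero => have h0 : N = 0 := by omega
                rw [h0]
      | succ n ih =>
        rcases Nat.lt_or_ge N (n + 1) with h1 | h1
        · have hNn : N ≤ n := by omega
          rw [hsucc n]
          show nIdx resp incl excl rank (σ n).1 (σ n).2.1 (ev n) = _
          rw [nIdx, dif_neg (hnB n hNn), dif_neg (hnC n hNn)]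
          exact ih hNn
        · have h2 : N = n + 1 := by omega
          rw [h2]
    set i0 := (σ N).2.1 with hi0def
    have hR1 : ∀ k, (σ (k + 1)).1 = dcrExec resp incl excl (σ k).1 (ev k) := by
      intro k; rw [hsucc k]
    have hpropag : ∀ k m, m ∈ ipr (σ k).1 →
        m ∉ resSet resp incl excl (σ k).1 (ev k) → m ∈ ipr (σ (k + 1)).1 := by
      intro k m hm hres
      rw [hR1]
      by_contra hc
      exact hres (Or.inl ⟨hm, hc⟩)
    have hfinal : ∀ x K, N ≤ K → (∀ k, K ≤ k → x ∈ ipr (σ k).1) →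
        (∀ k, K ≤ k → x ∉ resSet resp incl excl (σ k).1 (ev k)) → False := by
      intro x K hKN hmem hres
      have hxpend : x ∈ (markAt resp incl excl M0 (projEv ρ) K).2.1 := by
        have h1 := hmem K le_rfl
        rw [hfst] at h1
        exact h1.2
      obtain ⟨j, hj1, hj2⟩ := hacc K x hxpend
      rcases hj2 with h | h
      · have hevj : ev j = x := by
          have h2 : projEv ρ j = some (ev j) := by simp [projEv, hev j]
          rw [h] at h2
          exact (Option.some_injective _ h2).symm
        exact hres j hj1 (hevj ▸ mem_resSet_right)
      · have h1 := hmem j hj1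
        rw [hfst] at h1
        exact h h1.1
    by_cases hMR : ∃ k0, N ≤ k0 ∧ (mrSet rank (σ k0).1 i0).Nonempty
    · obtain ⟨k0, hk0, hne⟩ := hMR
      have hprop : ∀ k, k0 ≤ k → ∀ m, MinRankIn rank (mrSet rank (σ k).1 i0) m →
          m ∈ mrSet rank (σ (k + 1)).1 i0 := by
        intro k hk m hm
        have hNk : N ≤ k := le_trans hk0 hk
        have hm' : MinRankIn rank (mrSet rank (σ k).1 (σ k).2.1) m := by
          rw [hidx k hNk]
          exact hm
        have hres : m ∉ resSet resp incl excl (σ k).1 (ev k) :=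
          fun hr => hnB k hNk ⟨m, hm', hr⟩
        exact ⟨hpropag k m hm.1.1 hres, hm.1.2⟩
      obtain ⟨x, K, hK0, hmin⟩ :=
        stabilize hrank (fun k => mrSet rank (σ k).1 i0) k0 hne hprop
      refine hfinal x K (le_trans hk0 hK0) (fun k hk => (hmin k hk).1.1) ?_
      intro k hk hr
      have hm' : MinRankIn rank (mrSet rank (σ k).1 (σ k).2.1) x := by
        rw [hidx k (by omega)]
        exact hmin k hk
      exact hnB k (by omega) ⟨x, hm', hr⟩
    · push_neg at hMR
      have hMRe : ∀ k, N ≤ k → mrSet rank (σ k).1 (σ k).2.1 = ∅ := by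
        intro k hk
        rw [hidx k hk]
        exact hMR k hk
      have hRne : (ipr (σ (N + 1)).1).Nonempty := by
        rw [hR1]
        exact Set.nonempty_iff_ne_empty.2 (hnA N le_rfl)
      have hprop : ∀ k, N + 1 ≤ k → ∀ m, MinRankIn rank (ipr (σ k).1) m →
          m ∈ ipr (σ (k + 1)).1 := by
        intro k hk m hm
        have hNk : N ≤ k := by omega
        have hres : m ∉ resSet resp incl excl (σ k).1 (ev k) :=
          fun hr => hnC k hNk ⟨hMRe k hNk, m, hm, hr⟩
        exact hpropag k m hm.1 hres
      obtain ⟨x, K, hK0, hmin⟩ :=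
        stabilize hrank (fun k => ipr (σ k).1) (N + 1) hRne hprop
      refine hfinal x K (by omega) (fun k hk => (hmin k hk).1) ?_
      intro k hk hr
      exact hnC k (by omega) ⟨hMRe k (by omega), x, hmin k hk, hr⟩

end FwdAcc
section BwdAcc
variable {E P Act Roles : Type*}
variable {cond resp incl excl : E → E → Prop} {l : E → Act}
  {as : (P ⊕ Act) → Roles → Prop} {rank : E → ℕ} {M0 : Marking E}
  {σ : ℕ → BState E} {lab ρ : ℕ → Option (E × P × Act × Roles)}

lemma pend_persist {x : E} {i0 : ℕ}
    (hx : x ∈ (markAt resp incl excl M0 (projEv ρ) i0).2.1)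
    (hnex : ∀ j, i0 ≤ j → projEv ρ j ≠ some x) :
    ∀ j, i0 ≤ j → x ∈ (markAt resp incl excl M0 (projEv ρ) j).2.1 := by
  intro j hj
  induction j with
  | zero => have h0 : i0 = 0 := by omega
            rwa [h0] at hx
  | succ n ih =>
    rcases Nat.lt_or_ge i0 (n + 1) with h1 | h1
    · have ihn := ih (by omega)
      show x ∈ (dcrStepOpt resp incl excl
        (markAt resp incl excl M0 (projEv ρ) n) (projEv ρ n)).2.1
      rcases hpe : projEv ρ n with _ | e'
      · exact ihn
      · have hne : x ≠ e' := fun h => hnex n (by omega) (by rw [hpe, h])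
        exact Or.inl ⟨ihn, by simpa using hne⟩
    · have h2 : i0 = n + 1 := by omega
      rwa [h2] at hx

lemma flag_false_idx {S1 S2 : BState E} {lb : Option (E × P × Act × Roles)}
    (hstep : BuchiStep cond resp incl excl l as rank S1 lb S2)
    (hf : S2.2.2 = false) : S2.2.1 = S1.2.1 := by
  rcases lb with _ | ⟨e, p, a, r⟩
  · exact hstep.2.1
  · obtain ⟨_, _, _, _, _, hiff, _, _, hcl4⟩ := hstep
    have hnd : S2.2.2 ≠ true := by rw [hf]; simp
    exact hcl4 (fun h => hnd (hiff.2 (Or.inr (Or.inl h))))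
      (fun h => hnd (hiff.2 (Or.inr (Or.inr h))))

lemma trace_acc [Finite E] (hrank : Function.Injective rank)
    (htr : BuchiTrace cond resp incl excl l as rank M0 σ lab)
    (htd : IsTauDeletion lab ρ) (hba : BuchiAccepting σ) :
    DistDCRAccepting resp incl excl M0 ρ := by
  unfold DistDCRAccepting DCRAccepting
  by_contra hc
  push_neg at hc
  obtain ⟨i0, x, hxpend, hbad⟩ := hc
  have hin : ∀ j, i0 ≤ j → x ∈ ipr (markAt resp incl excl M0 (projEv ρ) j) :=
    fun j hj => ⟨(hbad j hj).2,
      pend_persist hxpend (fun j' hj' => (hbad j' hj').1) j hj⟩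
  have hfstm : ∀ m, (σ m).1 = markAt resp incl excl M0 (projEv ρ) (cntEv lab m) :=
    trace_fst htr htd
  by_cases hbd : ∃ m1, ∀ m, m1 ≤ m → lab m = none
  · -- eventually only τ-steps
    obtain ⟨m1, hm1⟩ := hbd
    have hcnt : ∀ m, m1 ≤ m → cntEv lab m = cntEv lab m1 := by
      intro m hm
      induction m with
      | zero => have h0 : m1 = 0 := by omega
                rw [h0]
      | succ n ih =>
        rcases Nat.lt_or_ge m1 (n + 1) with h1 | h1
        · rw [cntEv_succ, hm1 n (by omega)]
          simp [ih (by omega)]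
        · have h2 : m1 = n + 1 := by omega
          rw [h2]
    have hρnone : ∀ k, cntEv lab m1 ≤ k → ρ k = none := by
      intro k hk
      rcases htd k with ⟨i, h1, h2, _⟩ | ⟨_, h2⟩
      · exfalso
        rcases Nat.lt_or_ge i m1 with h4 | h4
        · have h5 : cntEv lab (i + 1) ≤ cntEv lab m1 := cntEv_mono lab (by omega)
          rw [cntEv_succ, if_pos h2] at h5
          omega
        · rw [hm1 i h4] at h2; simp at h2
      · exact h2
    have hpnone : ∀ k, cntEv lab m1 ≤ k → projEv ρ k = none := by
      intro k hk; simp [projEv, hρnone k hk]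
    have hconst := markAt_const (resp := resp) (incl := incl) (excl := excl)
      (M0 := M0) hpnone
    have hxL : x ∈ ipr (markAt resp incl excl M0 (projEv ρ) (cntEv lab m1)) := by
      have h6 := hin (max i0 (cntEv lab m1)) (by omega)
      rwa [hconst _ (by omega)] at h6
    obtain ⟨m, hm2, hmt⟩ := hba (m1 + 1)
    have hm3 : m1 ≤ m - 1 := by omega
    have hstep := htr.2.2.2 (m - 1)
    rw [hm1 (m - 1) hm3] at hstep
    obtain ⟨_, _, hiff⟩ := hstep
    rw [show m - 1 + 1 = m by omega] at hiff
    have hemp := hiff.1 hmt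
    rw [hfstm, hcnt _ hm3] at hemp
    have hxL' : x ∈ (markAt resp incl excl M0 (projEv ρ) (cntEv lab m1)).2.2 ∩
        (markAt resp incl excl M0 (projEv ρ) (cntEv lab m1)).2.1 := hxL
    rw [hemp] at hxL'
    exact hxL'
  · -- infinitely many event steps
    push_neg at hbd
    have hub : ∀ n, ∃ m, n ≤ cntEv lab m := by
      intro n
      induction n with
      | zero => exact ⟨0, by omega⟩
      | succ n ih =>
        obtain ⟨m, hm⟩ := ih
        obtain ⟨m', hm'1, hm'2⟩ := hbd m
        refine ⟨m' + 1, ?_⟩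
        have h1 : cntEv lab m ≤ cntEv lab m' := cntEv_mono lab hm'1
        rw [cntEv_succ, if_pos (by rcases h : lab m' with _ | v <;> simp_all)]
        omega
    obtain ⟨ms, hms⟩ := hub i0
    have hcge : ∀ m, ms ≤ m → i0 ≤ cntEv lab m :=
      fun m hm => le_trans hms (cntEv_mono lab hm)
    have hxσ : ∀ m, ms ≤ m → x ∈ (σ m).1.2.2 ∩ (σ m).1.2.1 := by
      intro m hm
      have h1 : x ∈ ipr ((σ m).1) := by
        rw [ipr, hfstm]
        exact hin _ (hcge m hm)
      exact h1
    have hnotev : ∀ m e p a r, ms ≤ m → lab m = some (e, p, a, r) → e ≠ x := by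
      intro m e p a r hm hl he
      have h1 : ρ (cntEv lab m) = lab m := tauDel_at_some htd (by simp [hl])
      have h2 : projEv ρ (cntEv lab m) = some e := by
        rw [projEv, h1, hl]; rfl
      exact (hbad (cntEv lab m) (hcge m hm)).1 (by rw [h2, he])
    -- never resolved
    have hnores : ∀ m e p a r, ms ≤ m → lab m = some (e, p, a, r) →
        x ∉ (((σ m).1.2.2 ∩ (σ m).1.2.1) \ ((σ (m+1)).1.2.2 ∩ (σ (m+1)).1.2.1)) ∪ {e} := by
      intro m e p a r hm hl hmem
      rcases hmem with h | h
      · exact h.2 (hxσ (m + 1) (by omega))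
      · exact hnotev m e p a r hm hl (by simpa using h.symm)
    -- Lemma A: below rank x, the index stays below and increases at accepting steps
    have hA : ∀ m, ms ≤ m → (σ m).2.1 < rank x →
        (σ (m + 1)).2.1 < rank x ∧
        ((σ (m + 1)).2.2 = true → (σ m).2.1 < (σ (m + 1)).2.1) := by
      intro m hm hlt
      have hstep := htr.2.2.2 m
      rcases hl : lab m with _ | ⟨e, p, a, r⟩
      · rw [hl] at hstep
        obtain ⟨_, hidx, hiff⟩ := hstep
        refine ⟨by rw [hidx]; exact hlt, fun hf => ?_⟩
        have h1 := hiff.1 hf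
        have h2 := hxσ m hm
        rw [h1] at h2
        exact absurd h2 (by simp)
      · rw [hl] at hstep
        obtain ⟨_, _, _, _, _, hiff, hcl2, hcl3, hcl4⟩ := hstep
        have hxMr : x ∈ {y | y ∈ (σ m).1.2.2 ∩ (σ m).1.2.1 ∧ (σ m).2.1 < rank y} :=
          ⟨hxσ m hm, hlt⟩
        obtain ⟨μ, hμ⟩ := exists_minRankIn rank ⟨x, hxMr⟩
        by_cases hc : μ ∈ (((σ m).1.2.2 ∩ (σ m).1.2.1) \ ((σ (m + 1)).1.2.2 ∩ (σ (m + 1)).1.2.1)) ∪ {e}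
        · have hμx : μ ≠ x := fun h => hnores m e p a r hm hl (h ▸ hc)
          have hltμ : rank μ < rank x :=
            lt_of_le_of_ne (hμ.2 x hxMr) (fun h => hμx (hrank h))
          have hidx' : (σ (m + 1)).2.1 = rank μ := hcl2 μ hμ hc
          exact ⟨by rw [hidx']; exact hltμ, fun _ => by rw [hidx']; exact hμ.1.2⟩
        · have hne1 : ¬ ∃ m', MinRankIn rank
              {y | y ∈ (σ m).1.2.2 ∩ (σ m).1.2.1 ∧ (σ m).2.1 < rank y} m' ∧
              m' ∈ (((σ m).1.2.2 ∩ (σ m).1.2.1) \ ((σ (m + 1)).1.2.2 ∩ (σ (m + 1)).1.2.1)) ∪ {e} := by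
            rintro ⟨m', h1, h2⟩
            rw [minRankIn_unique hrank h1 hμ] at h2
            exact hc h2
          have hne2 : ¬ ({y | y ∈ (σ m).1.2.2 ∩ (σ m).1.2.1 ∧ (σ m).2.1 < rank y} = ∅ ∧
              ∃ m', MinRankIn rank ((σ m).1.2.2 ∩ (σ m).1.2.1) m' ∧
              m' ∈ (((σ m).1.2.2 ∩ (σ m).1.2.1) \ ((σ (m + 1)).1.2.2 ∩ (σ (m + 1)).1.2.1)) ∪ {e}) := by
            intro h
            rw [h.1] at hxMr
            exact hxMr
          have hidx' := hcl4 hne1 hne2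
          refine ⟨by rw [hidx']; exact hlt, fun hf => ?_⟩
          rcases hiff.1 hf with h | h | h
          · have h2 := hxσ (m + 1) (by omega)
            rw [h] at h2
            exact absurd h2 (by simp)
          · exact absurd h hne1
          · exact absurd h hne2
    have hff : ∀ m, (σ (m + 1)).2.2 = false → (σ (m + 1)).2.1 = (σ m).2.1 :=
      fun m hf => flag_false_idx (htr.2.2.2 m) hf
    have hinf : ∀ m, ∃ k, m ≤ k ∧ (σ (k + 1)).2.2 = true := by
      intro m
      obtain ⟨k, hk1, hk2⟩ := hba (m + 1)
      exact ⟨k - 1, by omega, by rwa [show k - 1 + 1 = k by omega]⟩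
    by_cases hlow : ∃ m0, ms ≤ m0 ∧ (σ m0).2.1 < rank x
    · obtain ⟨m0, hm0, hl0⟩ := hlow
      have hinv : ∀ m, m0 ≤ m → (σ m).2.1 < rank x := by
        intro m hm
        induction m with
        | zero => have h0 : m0 = 0 := by omega
                  rw [← h0]; exact hl0
        | succ n ih =>
          rcases Nat.lt_or_ge m0 (n + 1) with h1 | h1
          · exact (hA n (by omega) (ih (by omega))).1
          · have h2 : m0 = n + 1 := by omega
            rw [← h2]; exact hl0
      have hmono : ∀ m, m0 ≤ m → (σ m).2.1 ≤ (σ (m + 1)).2.1 := by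
        intro m hm
        cases hfb : (σ (m + 1)).2.2 with
        | false => rw [hff m hfb]
        | true => exact le_of_lt ((hA m (by omega) (hinv m hm)).2 hfb)
      exact no_unbounded_increase hmono (fun m hm => le_of_lt (hinv m hm))
        (fun m => by
          obtain ⟨k, hk1, hk2⟩ := hinf (max m m0)
          exact ⟨k, by omega, by omega,
            (hA k (by omega) (hinv k (by omega))).2 hk2⟩)
    · push_neg at hlow
      obtain ⟨C, hC⟩ := Set.Finite.bddAbove (Set.finite_range rank)
      have hCr : ∀ y : E, rank y ≤ C := fun y => hC ⟨y, rfl⟩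
      have hB : ∀ m, ms ≤ m → (σ (m + 1)).2.2 = true →
          (σ m).2.1 < (σ (m + 1)).2.1 ∧ (σ (m + 1)).2.1 ≤ C := by
        intro m hm hf
        have hstep := htr.2.2.2 m
        rcases hl : lab m with _ | ⟨e, p, a, r⟩
        · rw [hl] at hstep
          obtain ⟨_, _, hiff⟩ := hstep
          have h1 := hiff.1 hf
          have h2 := hxσ m hm
          rw [h1] at h2
          exact absurd h2 (by simp)
        · rw [hl] at hstep
          obtain ⟨_, _, _, _, _, hiff, hcl2, hcl3, hcl4⟩ := hstep
          rcases hiff.1 hf with h | h | h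
          · have h2 := hxσ (m + 1) (by omega)
            rw [h] at h2
            exact absurd h2 (by simp)
          · obtain ⟨μ, hμ, hres⟩ := h
            have hidx' : (σ (m + 1)).2.1 = rank μ := hcl2 μ hμ hres
            exact ⟨by rw [hidx']; exact hμ.1.2, by rw [hidx']; exact hCr μ⟩
          · obtain ⟨hMre, μ, hμ, hres⟩ := h
            exfalso
            have hidx' : (σ (m + 1)).2.1 = rank μ := by
              refine hcl3 ?_ hMre μ hμ hres
              rintro ⟨m', h1, _⟩
              have := h1.1
              rw [hMre] at this
              exact this
            have hμx : μ ≠ x := fun hh => hnores m e p a r hm hl (hh ▸ hres)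
            have h3 : rank μ < rank x :=
              lt_of_le_of_ne (hμ.2 x (hxσ m hm)) (fun hh => hμx (hrank hh))
            have h4 := hlow (m + 1) (by omega)
            omega
      have hmono : ∀ m, ms ≤ m → (σ m).2.1 ≤ (σ (m + 1)).2.1 := by
        intro m hm
        cases hfb : (σ (m + 1)).2.2 with
        | false => rw [hff m hfb]
        | true => exact le_of_lt (hB m hm hfb).1
      have hbound : ∀ m, ms ≤ m → (σ m).2.1 ≤ max ((σ ms).2.1) C := by
        intro m hm
        induction m with
        | zero => have h0 : ms = 0 := by omega
                  rw [← h0]; exact le_max_left _ _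
        | succ n ih =>
          rcases Nat.lt_or_ge ms (n + 1) with h1 | h1
          · cases hfb : (σ (n + 1)).2.2 with
            | false => rw [hff n hfb]; exact ih (by omega)
            | true => exact le_trans (hB n (by omega) hfb).2 (le_max_right _ _)
          · have h2 : ms = n + 1 := by omega
            rw [← h2]; exact le_max_left _ _
      exact no_unbounded_increase hmono hbound
        (fun m => by
          obtain ⟨k, hk1, hk2⟩ := hinf (max m ms)
          exact ⟨k, by omega, by omega, (hB k (by omega) hk2).1⟩)

end BwdAcc
/-- For a finite distributed DCR graph `D` (events injectively ranked), the Büchi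
automaton with τ-event `B(D)` has exactly the same runs and the same accepting runs as
`D`: a sequence is a (finite or infinite) run of `D` iff it is the τ-deletion of the
labels of some execution of `B(D)`, and it is an accepting run of `D` iff it is the
τ-deletion of the labels of some accepting execution of `B(D)`. -/
theorem stmt15 {E P Act Roles : Type*} [Finite E]
    (cond resp incl excl : E → E → Prop) (M0 : Marking E)
    (l : E → Act) (as : (P ⊕ Act) → Roles → Prop)
    (rank : E → ℕ) (hrank : Function.Injective rank)
    (ρ : ℕ → Option (E × P × Act × Roles)) :
    (IsDistDCRRun cond resp incl excl M0 l as ρ ↔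
      ∃ σ lab, BuchiTrace cond resp incl excl l as rank M0 σ lab ∧
        IsTauDeletion lab ρ) ∧
    ((IsDistDCRRun cond resp incl excl M0 l as ρ ∧
        DistDCRAccepting resp incl excl M0 ρ) ↔
      ∃ σ lab, BuchiTrace cond resp incl excl l as rank M0 σ lab ∧
        IsTauDeletion lab ρ ∧ BuchiAccepting σ) := by
  refine ⟨⟨fun hrun => ⟨bTrace resp incl excl rank M0 ρ, ρ,
      bTrace_isTrace hrank hrun, tauDel_self hrun.1⟩, ?_⟩, ?_, ?_⟩
  · rintro ⟨σ, lab, htr, htd⟩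
    exact trace_run htr htd
  · rintro ⟨hrun, hacc⟩
    exact ⟨bTrace resp incl excl rank M0 ρ, ρ, bTrace_isTrace hrank hrun,
      tauDel_self hrun.1, bTrace_accepting hrank hrun hacc⟩
  · rintro ⟨σ, lab, htr, htd, hb⟩
    exact ⟨trace_run htr htd, trace_acc hrank htr htd hb⟩
end
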